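/- Model-free RTA invariance (scalar ODE version): let γ_p < λ, σ > 0, and suppose h_p, V : ℝ → ℝ are continuously differentiable with V(t) ≥ 0, V'(t) ≤ -λ·V(t), and h_p'(t) ≥ -γ_p·h_p(t) + σ·p(t)² - p(t)·√(2·V(t)) for all t ≥ 0, where p(t) ≥ 0. Then h_V(t) := h_p(t) - V(t)/(2σ(λ-γ_p)) satisfies h_V'(t) ≥ -γ_p·h_V(t) for all t ≥ 0; combined with h_V(0) ≥ 0 this gives h_V(t) ≥ 0 and h_p(t) ≥ 0 for all t ≥ 0. -/

import Mathlib

/-!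
Set `h_V = h_p - V / (2σ(λ - γ_p))`. Completing the square gives
`σ p² - p √(2V) ≥ -V / (2σ)` for every `p`, and the constant `1 / (2σ(λ - γ_p))` is chosen so
that the decay `V' ≤ -λ V` absorbs exactly this deficit: `h_V' ≥ -γ_p h_V`. Then
`h_V(t) e^{γ_p t}` is nondecreasing, so `h_V ≥ 0`, and `h_p ≥ h_V` because `V ≥ 0`.
-/

open Real Set

lemma neg_sq_div_le_mul_sq_sub_mul {σ : ℝ} (hσ : 0 < σ) (p b : ℝ) :
    -(b ^ 2 / (4 * σ)) ≤ σ * p ^ 2 - p * b := by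
  have key : σ * p ^ 2 - p * b + b ^ 2 / (4 * σ) = σ * (p - b / (2 * σ)) ^ 2 := by
    field_simp
    ring
  linarith [mul_nonneg hσ.le (sq_nonneg (p - b / (2 * σ)))]

lemma neg_div_le_mul_sq_sub_mul_sqrt {σ V : ℝ} (hσ : 0 < σ) (hV : 0 ≤ V) (p : ℝ) :
    -(V / (2 * σ)) ≤ σ * p ^ 2 - p * √(2 * V) := by
  have h := neg_sq_div_le_mul_sq_sub_mul hσ p √(2 * V)
  rw [sq_sqrt (by positivity)] at h
  convert h using 2
  field_simp
  ring

lemma hasDerivAt_mul_exp {f : ℝ → ℝ} {f' : ℝ} (γ t : ℝ) (hf : HasDerivAt f f' t) :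
    HasDerivAt (fun s => f s * exp (γ * s)) ((f' + γ * f t) * exp (γ * t)) t := by
  have hexp : HasDerivAt (fun s => exp (γ * s)) (exp (γ * t) * γ) t := by
    simpa using ((hasDerivAt_id t).const_mul γ).exp
  exact (hf.mul hexp).congr_deriv (by ring)

lemma nonneg_of_deriv_ge_neg_mul {f : ℝ → ℝ} {γ : ℝ} (hf : Differentiable ℝ f)
    (hderiv : ∀ t ≥ (0 : ℝ), -γ * f t ≤ deriv f t) (h0 : 0 ≤ f 0) :
    ∀ t ≥ (0 : ℝ), 0 ≤ f t := by
  set g : ℝ → ℝ := fun s => f s * exp (γ * s)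
  have hg : ∀ t, HasDerivAt g ((deriv f t + γ * f t) * exp (γ * t)) t :=
    fun t => hasDerivAt_mul_exp γ t (hf t).hasDerivAt
  have hmono : MonotoneOn g (Ici 0) := by
    refine monotoneOn_of_deriv_nonneg (convex_Ici 0)
      (fun t _ => (hg t).continuousAt.continuousWithinAt)
      (fun t _ => (hg t).differentiableAt.differentiableWithinAt) fun t ht => ?_
    rw [interior_Ici] at ht
    rw [(hg t).deriv]
    have := hderiv t (le_of_lt ht)
    exact mul_nonneg (by linarith) (exp_pos _).le
  intro t ht
  have hgt : g 0 ≤ g t := hmono self_mem_Ici ht ht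
  simp only [g, mul_zero, exp_zero, mul_one] at hgt
  exact nonneg_of_mul_nonneg_left (h0.trans hgt) (exp_pos _)

lemma deriv_barrier_ge {γ lam σ h dh V dV p : ℝ} (hγ : γ < lam) (hσ : 0 < σ) (hV : 0 ≤ V)
    (hdV : dV ≤ -lam * V) (hdh : -γ * h + σ * p ^ 2 - p * √(2 * V) ≤ dh) :
    -γ * (h - V / (2 * σ * (lam - γ))) ≤ dh - dV / (2 * σ * (lam - γ)) := by
  have hc : 0 < 2 * σ * (lam - γ) := by have := sub_pos.2 hγ; positivity
  have hsq := neg_div_le_mul_sq_sub_mul_sqrt hσ hV p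
  have hdVc : dV / (2 * σ * (lam - γ)) ≤ -lam * V / (2 * σ * (lam - γ)) :=
    div_le_div_of_nonneg_right hdV hc.le
  have hdeficit : (lam - γ) * (V / (2 * σ * (lam - γ))) = V / (2 * σ) := by
    field_simp [(sub_pos.2 hγ).ne']
  have : -lam * V / (2 * σ * (lam - γ)) = -(lam * (V / (2 * σ * (lam - γ)))) := by ring
  linarith

theorem stmt_12_general (γp lam σ : ℝ) (h2 : γp < lam) (hσ : 0 < σ)
    (hp V p : ℝ → ℝ) (hhp : ContDiff ℝ 1 hp) (hVd : ContDiff ℝ 1 V)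
    (hVnn : ∀ t ≥ (0:ℝ), 0 ≤ V t)
    (hVdec : ∀ t ≥ (0:ℝ), deriv V t ≤ -lam * V t)
    (hhpcond : ∀ t ≥ (0:ℝ),
      deriv hp t ≥ -γp * hp t + σ * (p t)^2 - (p t) * Real.sqrt (2 * V t))
    (hV0 : 0 ≤ hp 0 - V 0 / (2*σ*(lam - γp))) :
    ∀ t ≥ (0:ℝ), 0 ≤ hp t := by
  set c := 2 * σ * (lam - γp)
  have hc : 0 < c := by have := sub_pos.2 h2; positivity
  have hdhp : Differentiable ℝ hp := hhp.differentiable one_ne_zero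
  have hdV : Differentiable ℝ V := hVd.differentiable one_ne_zero
  have hderiv : ∀ t, HasDerivAt (fun s => hp s - V s / c) (deriv hp t - deriv V t / c) t :=
    fun t => (hdhp t).hasDerivAt.sub ((hdV t).hasDerivAt.div_const c)
  have hbarrier : ∀ t ≥ (0 : ℝ), 0 ≤ hp t - V t / c :=
    nonneg_of_deriv_ge_neg_mul (fun t => (hderiv t).differentiableAt)
      (fun t ht => (hderiv t).deriv ▸
        deriv_barrier_ge h2 hσ (hVnn t ht) (hVdec t ht) (hhpcond t ht)) hV0
  intro t ht
  linarith [hbarrier t ht, div_nonneg (hVnn t ht) hc.le]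

theorem stmt_12 (γp lam σ : ℝ) (h1 : 0 < γp) (h2 : γp < lam) (hσ : 0 < σ)
    (hp V p : ℝ → ℝ) (hhp : ContDiff ℝ 1 hp) (hVd : ContDiff ℝ 1 V)
    (hVnn : ∀ t ≥ (0:ℝ), 0 ≤ V t) (hpnn : ∀ t ≥ (0:ℝ), 0 ≤ p t)
    (hVdec : ∀ t ≥ (0:ℝ), deriv V t ≤ -lam * V t)
    (hhpcond : ∀ t ≥ (0:ℝ),
      deriv hp t ≥ -γp * hp t + σ * (p t)^2 - (p t) * Real.sqrt (2 * V t))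
    (hV0 : 0 ≤ hp 0 - V 0 / (2*σ*(lam - γp))) :
    ∀ t ≥ (0:ℝ), 0 ≤ hp t :=
  stmt_12_general γp lam σ h2 hσ hp V p hhp hVd hVnn hVdec hhpcond hV0
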